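/- Let f, g, h be maps on ℝ²_{≥0} defined by f(x) = (x₁ + min(x₁,x₂), x₂), g(x) = (0, x₁ + x₂), h(x) = (x₁ + x₂, 0), and let 𝒜 = {f, g, h}. Then 𝒜 is irreducible (no non-trivial face of ℝ²_{≥0} is invariant under all three maps), r(𝒜) = 1, but the semigroup 𝒜⁺ is unbounded (indeed f^k(𝟙) is unbounded). Hence the boundedness conclusion of the irreducible subadditive boundedness theorem fails without subadditivity. -/
import Mathlib


open Filter Topology Set

noncomputable section

/-- A wedge in a real normed space: a convex set closed under positive scalar multiplication. -/
def IsWedge {X : Type*} [NormedAddCommGroup X] [NormedSpace ℝ X] (W : Set X) : Prop :=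
  Convex ℝ W ∧ ∀ c : ℝ, 0 < c → ∀ x ∈ W, c • x ∈ W

/-- A closed cone: closed, convex, closed under positive scalar multiplication, K ∩ (−K) = {0}. -/
def IsClosedCone {X : Type*} [NormedAddCommGroup X] [NormedSpace ℝ X] (K : Set X) : Prop :=
  IsClosed K ∧ Convex ℝ K ∧ (∀ c : ℝ, 0 < c → ∀ x ∈ K, c • x ∈ K) ∧ K ∩ (-K) = {0}

/-- A polyhedral cone: intersection of finitely many closed halfspaces through the origin. -/
def IsPolyhedralCone {X : Type*} [NormedAddCommGroup X] [NormedSpace ℝ X] (K : Set X) : Prop :=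
  ∃ (k : ℕ) (φ : Fin k → (X →ₗ[ℝ] ℝ)), K = {x | ∀ i, 0 ≤ φ i x}

/-- `f` maps `W` into itself and is positively homogeneous on `W`. -/
def HomogOn {X : Type*} [NormedAddCommGroup X] [NormedSpace ℝ X] (f : X → X) (W : Set X) : Prop :=
  Set.MapsTo f W W ∧ ∀ c : ℝ, 0 < c → ∀ x ∈ W, f (c • x) = c • f x

/-- `f` is order-preserving with respect to the order induced by the cone `K`. -/
def OrderPresOn {X : Type*} [NormedAddCommGroup X] [NormedSpace ℝ X] (f : X → X) (K : Set X) : Prop :=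
  ∀ x ∈ K, ∀ y ∈ K, y - x ∈ K → f y - f x ∈ K

/-- `f` is subadditive on `K`: f(x+y) ≤ f(x)+f(y) in the cone order. -/
def SubaddOn {X : Type*} [NormedAddCommGroup X] [NormedSpace ℝ X] (f : X → X) (K : Set X) : Prop :=
  ∀ x ∈ K, ∀ y ∈ K, (f x + f y) - f (x + y) ∈ K

/-- The norm of a homogeneous map on `W`: sup of ‖f x‖ over unit vectors of `W`. -/
def opNormW {X : Type*} [NormedAddCommGroup X] (f : X → X) (W : Set X) : ℝ :=
  sSup ((fun x => ‖f x‖) '' {x ∈ W | ‖x‖ = 1})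

/-- A bounded homogeneous map on `W`. -/
def BoundedMapOn {X : Type*} [NormedAddCommGroup X] (f : X → X) (W : Set X) : Prop :=
  ∃ C : ℝ, ∀ x ∈ W, ‖f x‖ ≤ C * ‖x‖

/-- A bounded family of homogeneous maps on `W`. -/
def BoundedFamOn {X : Type*} [NormedAddCommGroup X] (A : Set (X → X)) (W : Set X) : Prop :=
  ∃ C : ℝ, ∀ f ∈ A, ∀ x ∈ W, ‖f x‖ ≤ C * ‖x‖

/-- `famPow A m` = 𝒜^m, the set of m-fold compositions of maps from `A` (with 𝒜^0 = {id}). -/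
def famPow {X : Type*} (A : Set (X → X)) : ℕ → Set (X → X)
  | 0 => {id}
  | m + 1 => {h | ∃ f ∈ A, ∃ g ∈ famPow A m, h = f ∘ g}

/-- The composition of two families of maps. -/
def compFam {X : Type*} (A B : Set (X → X)) : Set (X → X) :=
  {h | ∃ f ∈ A, ∃ g ∈ B, h = f ∘ g}

/-- The Bonsall cone spectral radius r(f) = inf_{n>0} ‖f^n‖^{1/n}. -/
def coneSpecRad {X : Type*} [NormedAddCommGroup X] (f : X → X) (W : Set X) : ℝ :=
  ⨅ n : ℕ+, (opNormW (f^[(n : ℕ)]) W) ^ (((n : ℕ) : ℝ)⁻¹)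

/-- sup_{f ∈ 𝒜^m} ‖f‖^{1/m}. -/
def jointTerm {X : Type*} [NormedAddCommGroup X] (A : Set (X → X)) (W : Set X) (m : ℕ) : ℝ :=
  sSup ((fun f => (opNormW f W) ^ ((m : ℝ)⁻¹)) '' famPow A m)

/-- sup_{f ∈ 𝒜^m} r(f)^{1/m}. -/
def genTerm {X : Type*} [NormedAddCommGroup X] (A : Set (X → X)) (W : Set X) (m : ℕ) : ℝ :=
  sSup ((fun f => (coneSpecRad f W) ^ ((m : ℝ)⁻¹)) '' famPow A m)

/-- The joint spectral radius r̂(𝒜) = inf_{m>0} sup_{f ∈ 𝒜^m} ‖f‖^{1/m}. -/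
def jointRad {X : Type*} [NormedAddCommGroup X] (A : Set (X → X)) (W : Set X) : ℝ :=
  ⨅ m : ℕ+, jointTerm A W (m : ℕ)

/-- The generalized spectral radius r(𝒜) = sup_{m>0} sup_{f ∈ 𝒜^m} r(f)^{1/m}. -/
def genRad {X : Type*} [NormedAddCommGroup X] (A : Set (X → X)) (W : Set X) : ℝ :=
  ⨆ m : ℕ+, genTerm A W (m : ℕ)

/-- β_m = inf_{f ∈ 𝒜^m} ‖f‖. -/
def subBeta {X : Type*} [NormedAddCommGroup X] (A : Set (X → X)) (W : Set X) (m : ℕ) : ℝ :=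
  sInf ((fun f => opNormW f W) '' famPow A m)

/-- γ_m = inf_{f ∈ 𝒜^m} r(f). -/
def subGamma {X : Type*} [NormedAddCommGroup X] (A : Set (X → X)) (W : Set X) (m : ℕ) : ℝ :=
  sInf ((fun f => coneSpecRad f W) '' famPow A m)

/-- F_m^d = f_m ∘ ⋯ ∘ f_1 for a sequence d of maps. -/
def seqComp {X : Type*} (d : ℕ → X → X) : ℕ → X → X
  | 0 => id
  | m + 1 => d m ∘ seqComp d m

/-- The standard cone ℝⁿ_{≥0}. -/
def stdCone (n : ℕ) : Set (Fin n → ℝ) := {x | ∀ i, 0 ≤ x i}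

/-- The closed face F_J of the standard cone. -/
def stdFace {n : ℕ} (J : Set (Fin n)) : Set (Fin n → ℝ) :=
  {x | (∀ i, 0 ≤ x i) ∧ ∀ i ∉ J, x i = 0}

/-- A family of maps on ℝⁿ_{≥0} is irreducible if no non-trivial closed face is invariant
under every member of the family. -/
def IrreducibleFam {n : ℕ} (A : Set ((Fin n → ℝ) → Fin n → ℝ)) : Prop :=
  ¬ ∃ J : Set (Fin n), J.Nonempty ∧ J ≠ Set.univ ∧ ∀ f ∈ A, Set.MapsTo f (stdFace J) (stdFace J)

/-- f(x) = (x₁ + min(x₁,x₂), x₂). -/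
def fC : (Fin 2 → ℝ) → Fin 2 → ℝ := fun x => ![x 0 + min (x 0) (x 1), x 1]

/-- g(x) = (0, x₁ + x₂). -/
def gC : (Fin 2 → ℝ) → Fin 2 → ℝ := fun x => ![0, x 0 + x 1]

/-- h(x) = (x₁ + x₂, 0). -/
def hC : (Fin 2 → ℝ) → Fin 2 → ℝ := fun x => ![x 0 + x 1, 0]

namespace S11
abbrev W : Set (Fin 2 → ℝ) := stdCone 2
abbrev A : Set ((Fin 2 → ℝ) → Fin 2 → ℝ) := {fC, gC, hC}

@[simp] lemma fC0 (x : Fin 2 → ℝ) : fC x 0 = x 0 + min (x 0) (x 1) := rfl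
@[simp] lemma fC1 (x : Fin 2 → ℝ) : fC x 1 = x 1 := rfl
@[simp] lemma gC0 (x : Fin 2 → ℝ) : gC x 0 = 0 := rfl
@[simp] lemma gC1 (x : Fin 2 → ℝ) : gC x 1 = x 0 + x 1 := rfl
@[simp] lemma hC0 (x : Fin 2 → ℝ) : hC x 0 = x 0 + x 1 := rfl
@[simp] lemma hC1 (x : Fin 2 → ℝ) : hC x 1 = 0 := rfl

lemma ext2 {x y : Fin 2 → ℝ} (h0 : x 0 = y 0) (h1 : x 1 = y 1) : x = y := by
  funext i; fin_cases i <;> assumption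

lemma mem_W {x : Fin 2 → ℝ} (h0 : 0 ≤ x 0) (h1 : 0 ≤ x 1) : x ∈ W := by
  intro i; fin_cases i <;> assumption

lemma fC_mem {x : Fin 2 → ℝ} (hx : x ∈ W) : fC x ∈ W := by
  have h0 := hx 0; have h1 := hx 1
  exact mem_W (by simp; positivity) (by simpa using h1)

lemma gC_mem {x : Fin 2 → ℝ} (hx : x ∈ W) : gC x ∈ W := by
  have h0 := hx 0; have h1 := hx 1
  exact mem_W (by simp) (by simp; linarith)

lemma hC_mem {x : Fin 2 → ℝ} (hx : x ∈ W) : hC x ∈ W := by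
  have h0 := hx 0; have h1 := hx 1
  exact mem_W (by simp; linarith) (by simp)

lemma fC_axis {x : Fin 2 → ℝ} (hx : x ∈ W) (h : x 0 = 0 ∨ x 1 = 0) : fC x = x := by
  have h0 := hx 0; have h1 := hx 1
  apply ext2 _ (by simp)
  rcases h with h | h <;> simp [h]
  · exact h1
  · exact h0

lemma fk_axis {x : Fin 2 → ℝ} (hx : x ∈ W) (h : x 0 = 0 ∨ x 1 = 0) (k : ℕ) : fC^[k] x = x := by
  induction k with
  | zero => rfl
  | succ k ih => rw [Function.iterate_succ_apply', ih, fC_axis hx h]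

lemma fk_prop (k : ℕ) {x : Fin 2 → ℝ} (hx : x ∈ W) :
    fC^[k] x ∈ W ∧ (fC^[k] x) 1 = x 1 ∧ (fC^[k] x) 0 ≤ x 0 + k * x 1 := by
  induction k with
  | zero => exact ⟨hx, rfl, by simp⟩
  | succ k ih =>
    obtain ⟨hmem, h1, h0⟩ := ih
    rw [Function.iterate_succ_apply']
    refine ⟨fC_mem hmem, by simp [h1], ?_⟩
    simp only [fC0]
    push_cast
    linarith [min_le_right ((fC^[k] x) 0) ((fC^[k] x) 1), h1]


lemma gg (y : Fin 2 → ℝ) : gC (gC y) = gC y := ext2 (by simp) (by simp)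
lemma hh (y : Fin 2 → ℝ) : hC (hC y) = hC y := ext2 (by simp) (by simp)
lemma gh (y : Fin 2 → ℝ) : gC (hC y) = gC y := ext2 (by simp) (by simp)
lemma hg (y : Fin 2 → ℝ) : hC (gC y) = hC y := ext2 (by simp) (by simp [add_comm])

lemma fg {y : Fin 2 → ℝ} (hy : y ∈ W) : fC (gC y) = gC y :=
  fC_axis (gC_mem hy) (Or.inl rfl)
lemma fh {y : Fin 2 → ℝ} (hy : y ∈ W) : fC (hC y) = hC y :=
  fC_axis (hC_mem hy) (Or.inr rfl)
lemma fkg {y : Fin 2 → ℝ} (hy : y ∈ W) (k : ℕ) : fC^[k] (gC y) = gC y :=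
  fk_axis (gC_mem hy) (Or.inl rfl) k
lemma fkh {y : Fin 2 → ℝ} (hy : y ∈ W) (k : ℕ) : fC^[k] (hC y) = hC y :=
  fk_axis (hC_mem hy) (Or.inr rfl) k

/-- Normal form for elements of the semigroup, valid on the cone. -/
lemma normal_form : ∀ m : ℕ, ∀ F ∈ famPow A m, Set.MapsTo F W W ∧
    ∃ k ≤ m, (Set.EqOn F (fC^[k]) W ∨ Set.EqOn F (gC ∘ fC^[k]) W ∨ Set.EqOn F (hC ∘ fC^[k]) W) := by
  intro m
  induction m with
  | zero =>
    intro F hF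
    rw [famPow] at hF
    rw [Set.mem_singleton_iff] at hF
    subst hF
    exact ⟨Set.mapsTo_id _, 0, le_refl 0, Or.inl (fun x _ => rfl)⟩
  | succ m ih =>
    rintro F ⟨a, ha, G, hG, rfl⟩
    obtain ⟨hGmaps, k, hk, hform⟩ := ih G hG
    have hamaps : Set.MapsTo a W W := by
      rcases ha with rfl | rfl | rfl
      · exact fun x hx => fC_mem hx
      · exact fun x hx => gC_mem hx
      · exact fun x hx => hC_mem hx
    refine ⟨hamaps.comp hGmaps, ?_⟩
    have hy : ∀ x ∈ W, fC^[k] x ∈ W := fun x hx => (fk_prop k hx).1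
    rcases hform with hf | hf | hf
    · -- G = f^k on W
      rcases ha with rfl | rfl | rfl
      · exact ⟨k+1, by omega, Or.inl (fun x hx => by
          simp only [Function.comp_apply, hf hx, ← Function.iterate_succ_apply' fC k x])⟩
      · exact ⟨k, by omega, Or.inr (Or.inl (fun x hx => by
          simp only [Function.comp_apply, hf hx]))⟩
      · exact ⟨k, by omega, Or.inr (Or.inr (fun x hx => by
          simp only [Function.comp_apply, hf hx]))⟩
    · -- G = g ∘ f^k on W
      rcases ha with rfl | rfl | rfl
      · exact ⟨k, by omega, Or.inr (Or.inl (fun x hx => by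
          simp only [Function.comp_apply, hf hx, fg (hy x hx)]))⟩
      · exact ⟨k, by omega, Or.inr (Or.inl (fun x hx => by
          simp only [Function.comp_apply, hf hx, gg]))⟩
      · exact ⟨k, by omega, Or.inr (Or.inr (fun x hx => by
          simp only [Function.comp_apply, hf hx, hg]))⟩
    · -- G = h ∘ f^k on W
      rcases ha with rfl | rfl | rfl
      · exact ⟨k, by omega, Or.inr (Or.inr (fun x hx => by
          simp only [Function.comp_apply, hf hx, fh (hy x hx)]))⟩
      · exact ⟨k, by omega, Or.inr (Or.inl (fun x hx => by
          simp only [Function.comp_apply, hf hx, gh]))⟩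
      · exact ⟨k, by omega, Or.inr (Or.inr (fun x hx => by
          simp only [Function.comp_apply, hf hx, hh]))⟩

lemma eqOn_iterate {F N : (Fin 2 → ℝ) → Fin 2 → ℝ} (hF : Set.MapsTo F W W)
    (hN : Set.MapsTo N W W) (h : Set.EqOn F N W) (n : ℕ) : Set.EqOn (F^[n]) (N^[n]) W := by
  induction n with
  | zero => exact fun x _ => rfl
  | succ n ih =>
    intro x hx
    rw [Function.iterate_succ_apply', Function.iterate_succ_apply', ih hx,
      h ((hN.iterate n) hx)]

lemma gk_maps (k : ℕ) : Set.MapsTo (gC ∘ fC^[k]) W W :=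
  fun x hx => gC_mem ((fk_prop k hx).1)
lemma hk_maps (k : ℕ) : Set.MapsTo (hC ∘ fC^[k]) W W :=
  fun x hx => hC_mem ((fk_prop k hx).1)
lemma fk_maps (k : ℕ) : Set.MapsTo (fC^[k]) W W := fun x hx => (fk_prop k hx).1

lemma gk_iter (k n : ℕ) (hn : 1 ≤ n) : Set.EqOn ((gC ∘ fC^[k])^[n]) (gC ∘ fC^[k]) W := by
  induction n with
  | zero => omega
  | succ n ih =>
    rcases Nat.eq_or_lt_of_le hn with h1 | h1
    · rw [← h1]; exact fun x _ => rfl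
    intro x hx
    rw [Function.iterate_succ_apply', ih (by omega) hx]
    show gC (fC^[k] (gC (fC^[k] x))) = gC (fC^[k] x)
    rw [fkg (fk_maps k hx) k, gg]

lemma hk_iter (k n : ℕ) (hn : 1 ≤ n) : Set.EqOn ((hC ∘ fC^[k])^[n]) (hC ∘ fC^[k]) W := by
  induction n with
  | zero => omega
  | succ n ih =>
    rcases Nat.eq_or_lt_of_le hn with h1 | h1
    · rw [← h1]; exact fun x _ => rfl
    intro x hx
    rw [Function.iterate_succ_apply', ih (by omega) hx]
    show hC (fC^[k] (hC (fC^[k] x))) = hC (fC^[k] x)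
    rw [fkh (fk_maps k hx) k, hh]


lemma norm_le_of_unit {x : Fin 2 → ℝ} (hx : x ∈ W) (hu : ‖x‖ = 1) :
    x 0 ≤ 1 ∧ x 1 ≤ 1 := by
  constructor
  · calc x 0 ≤ ‖x 0‖ := le_abs_self _
    _ ≤ ‖x‖ := norm_le_pi_norm x 0
    _ = 1 := hu
  · calc x 1 ≤ ‖x 1‖ := le_abs_self _
    _ ≤ ‖x‖ := norm_le_pi_norm x 1
    _ = 1 := hu

lemma norm_le_of_W {y : Fin 2 → ℝ} (hy : y ∈ W) {C : ℝ} (h0 : y 0 ≤ C) (h1 : y 1 ≤ C) :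
    ‖y‖ ≤ C := by
  have hC : 0 ≤ C := le_trans (hy 0) h0
  refine (pi_norm_le_iff_of_nonneg hC).2 (fun i => ?_)
  fin_cases i
  · show ‖y 0‖ ≤ C
    rw [Real.norm_eq_abs, abs_of_nonneg (hy 0)]; exact h0
  · show ‖y 1‖ ≤ C
    rw [Real.norm_eq_abs, abs_of_nonneg (hy 1)]; exact h1

lemma fk_norm_bound (k : ℕ) {x : Fin 2 → ℝ} (hx : x ∈ W) (hu : ‖x‖ = 1) :
    ‖fC^[k] x‖ ≤ (k : ℝ) + 1 := by
  obtain ⟨hm, h1, h0⟩ := fk_prop k hx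
  obtain ⟨hx0, hx1⟩ := norm_le_of_unit hx hu
  refine norm_le_of_W hm ?_ ?_
  · have : (k:ℝ) * x 1 ≤ k := by
      calc (k:ℝ) * x 1 ≤ (k:ℝ) * 1 := by
            exact mul_le_mul_of_nonneg_left hx1 (Nat.cast_nonneg k)
      _ = k := mul_one _
    linarith
  · rw [h1]; linarith

lemma gk_norm_bound (k : ℕ) {x : Fin 2 → ℝ} (hx : x ∈ W) (hu : ‖x‖ = 1) :
    ‖(gC ∘ fC^[k]) x‖ ≤ (k : ℝ) + 2 := by
  obtain ⟨hm, h1, h0⟩ := fk_prop k hx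
  obtain ⟨hx0, hx1⟩ := norm_le_of_unit hx hu
  refine norm_le_of_W (gk_maps k hx) ?_ ?_
  · show (0:ℝ) ≤ _; positivity
  · show fC^[k] x 0 + fC^[k] x 1 ≤ _
    have : (k:ℝ) * x 1 ≤ k := by
      calc (k:ℝ) * x 1 ≤ (k:ℝ) * 1 := mul_le_mul_of_nonneg_left hx1 (Nat.cast_nonneg k)
      _ = k := mul_one _
    rw [h1]; linarith

lemma hk_norm_bound (k : ℕ) {x : Fin 2 → ℝ} (hx : x ∈ W) (hu : ‖x‖ = 1) :
    ‖(hC ∘ fC^[k]) x‖ ≤ (k : ℝ) + 2 := by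
  obtain ⟨hm, h1, h0⟩ := fk_prop k hx
  obtain ⟨hx0, hx1⟩ := norm_le_of_unit hx hu
  refine norm_le_of_W (hk_maps k hx) ?_ ?_
  · show fC^[k] x 0 + fC^[k] x 1 ≤ _
    have : (k:ℝ) * x 1 ≤ k := by
      calc (k:ℝ) * x 1 ≤ (k:ℝ) * 1 := mul_le_mul_of_nonneg_left hx1 (Nat.cast_nonneg k)
      _ = k := mul_one _
    rw [h1]; linarith
  · show (0:ℝ) ≤ _; positivity

def e0 : Fin 2 → ℝ := ![1, 0]
def e1 : Fin 2 → ℝ := ![0, 1]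

lemma e0_mem : e0 ∈ W := mem_W (by norm_num [e0]) (by norm_num [e0])
lemma e1_mem : e1 ∈ W := mem_W (by norm_num [e1]) (by norm_num [e1])

lemma e0_norm : ‖e0‖ = 1 := by
  apply le_antisymm (norm_le_of_W e0_mem (by norm_num [e0]) (by norm_num [e0]))
  calc (1:ℝ) = ‖e0 0‖ := by norm_num [e0]
  _ ≤ ‖e0‖ := norm_le_pi_norm e0 0

lemma e1_norm : ‖e1‖ = 1 := by
  apply le_antisymm (norm_le_of_W e1_mem (by norm_num [e1]) (by norm_num [e1]))
  calc (1:ℝ) = ‖e1 1‖ := by norm_num [e1]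
  _ ≤ ‖e1‖ := norm_le_pi_norm e1 1

lemma fk_e0 (k : ℕ) : fC^[k] e0 = e0 := fk_axis e0_mem (Or.inr (by norm_num [e0])) k
lemma fk_e1 (k : ℕ) : fC^[k] e1 = e1 := fk_axis e1_mem (Or.inl (by norm_num [e1])) k
lemma g_e1 : gC e1 = e1 := ext2 (by norm_num [e1]) (by norm_num [e1])
lemma h_e0 : hC e0 = e0 := ext2 (by norm_num [e0]) (by norm_num [e0])

/-- opNormW bounds from pointwise bounds plus a witness. -/
lemma opNormW_bounds {F : (Fin 2 → ℝ) → Fin 2 → ℝ} {C : ℝ}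
    (hub : ∀ x ∈ W, ‖x‖ = 1 → ‖F x‖ ≤ C)
    (hwit : ∃ x ∈ W, ‖x‖ = 1 ∧ 1 ≤ ‖F x‖) :
    1 ≤ opNormW F W ∧ opNormW F W ≤ C := by
  obtain ⟨x, hx, hxu, hx1⟩ := hwit
  have hbdd : BddAbove ((fun x => ‖F x‖) '' {x ∈ W | ‖x‖ = 1}) := by
    refine ⟨C, ?_⟩
    rintro y ⟨z, ⟨hz, hzu⟩, rfl⟩
    exact hub z hz hzu
  constructor
  · calc (1:ℝ) ≤ ‖F x‖ := hx1
    _ ≤ opNormW F W := le_csSup hbdd ⟨x, ⟨hx, hxu⟩, rfl⟩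
  · have hne : ((fun x => ‖F x‖) '' {x ∈ W | ‖x‖ = 1}).Nonempty :=
      ⟨‖F x‖, ⟨x, ⟨hx, hxu⟩, rfl⟩⟩
    refine csSup_le hne ?_
    rintro y ⟨z, ⟨hz, hzu⟩, rfl⟩
    exact hub z hz hzu

/-- The limit ((m·n + 2)^(1/n)) → 1. -/
lemma tendsto_bound (m : ℕ) :
    Tendsto (fun n : ℕ => ((m : ℝ) * n + 2) ^ ((n : ℝ)⁻¹)) atTop (𝓝 1) := by
  have t2 : Tendsto (fun n : ℕ => ((n : ℝ)) ^ ((n : ℝ)⁻¹)) atTop (𝓝 1) := by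
    have := tendsto_rpow_div.comp tendsto_natCast_atTop_atTop (α := ℕ)
    simpa [Function.comp_def, one_div] using this
  have t1 : Tendsto (fun n : ℕ => ((m : ℝ) + 2) ^ ((n : ℝ)⁻¹)) atTop (𝓝 1) := by
    have hc : ((m:ℝ) + 2) ≠ 0 := by positivity
    have := (Real.continuousAt_const_rpow (b := 0) hc).tendsto.comp
      tendsto_inv_atTop_nhds_zero_nat
    simpa [Function.comp_def, Real.rpow_zero] using this
  have tprod : Tendsto (fun n : ℕ => ((m : ℝ) + 2) ^ ((n : ℝ)⁻¹) * ((n : ℝ)) ^ ((n : ℝ)⁻¹))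
      atTop (𝓝 1) := by
    have := t1.mul t2
    simpa using this
  apply tendsto_of_tendsto_of_tendsto_of_le_of_le' tendsto_const_nhds tprod
  · filter_upwards [eventually_ge_atTop 1] with n hn
    have hn' : (1:ℝ) ≤ (n:ℝ) := by exact_mod_cast hn
    have hb : (1:ℝ) ≤ (m : ℝ) * n + 2 := by nlinarith [Nat.cast_nonneg (α := ℝ) m]
    calc (1:ℝ) = 1 ^ ((n : ℝ)⁻¹) := (Real.one_rpow _).symm
    _ ≤ ((m : ℝ) * n + 2) ^ ((n : ℝ)⁻¹) := Real.rpow_le_rpow (by norm_num) hb (by positivity)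
  · filter_upwards [eventually_ge_atTop 1] with n hn
    have hn' : (1:ℝ) ≤ (n:ℝ) := by exact_mod_cast hn
    have hb : ((m : ℝ) * n + 2) ≤ ((m : ℝ) + 2) * n := by nlinarith [Nat.cast_nonneg (α := ℝ) m]
    calc ((m : ℝ) * n + 2) ^ ((n : ℝ)⁻¹) ≤ (((m : ℝ) + 2) * n) ^ ((n : ℝ)⁻¹) :=
          Real.rpow_le_rpow (by positivity) hb (by positivity)
    _ = ((m : ℝ) + 2) ^ ((n : ℝ)⁻¹) * ((n : ℝ)) ^ ((n : ℝ)⁻¹) :=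
          Real.mul_rpow (by positivity) (by positivity)

/-- Key: every element of the semigroup has cone spectral radius 1. -/
lemma csr_eq_one {F : (Fin 2 → ℝ) → Fin 2 → ℝ} {m : ℕ} (hF : F ∈ famPow A m) :
    coneSpecRad F W = 1 := by
  obtain ⟨hmaps, k, hk, hform⟩ := normal_form m F hF
  -- bounds on opNormW of iterates
  have key : ∀ n : ℕ, 1 ≤ n → 1 ≤ opNormW (F^[n]) W ∧ opNormW (F^[n]) W ≤ (m : ℝ) * n + 2 := by
    intro n hn
    have hn' : (1:ℝ) ≤ (n:ℝ) := by exact_mod_cast hn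
    have hkm : (k:ℝ) ≤ (m:ℝ) := by exact_mod_cast hk
    rcases hform with hf | hf | hf
    · have heq : Set.EqOn (F^[n]) (fC^[k*n]) W := by
        have := eqOn_iterate hmaps (fk_maps k) hf n
        intro x hx; rw [this hx, Function.iterate_mul]
      refine opNormW_bounds ?_ ⟨e0, e0_mem, e0_norm, ?_⟩
      · intro x hx hu
        rw [heq hx]
        calc ‖fC^[k*n] x‖ ≤ ((k*n : ℕ) : ℝ) + 1 := fk_norm_bound _ hx hu
        _ ≤ (m : ℝ) * n + 2 := by push_cast; nlinarith
      · rw [heq e0_mem, fk_e0, e0_norm]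
    · have heq : Set.EqOn (F^[n]) (gC ∘ fC^[k]) W :=
        fun x hx => (eqOn_iterate hmaps (gk_maps k) hf n hx).trans (gk_iter k n hn hx)
      refine opNormW_bounds ?_ ⟨e1, e1_mem, e1_norm, ?_⟩
      · intro x hx hu
        rw [heq hx]
        calc ‖(gC ∘ fC^[k]) x‖ ≤ (k:ℝ) + 2 := gk_norm_bound _ hx hu
        _ ≤ (m : ℝ) * n + 2 := by nlinarith
      · rw [heq e1_mem]
        show 1 ≤ ‖gC (fC^[k] e1)‖
        rw [fk_e1, g_e1, e1_norm]
    · have heq : Set.EqOn (F^[n]) (hC ∘ fC^[k]) W :=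
        fun x hx => (eqOn_iterate hmaps (hk_maps k) hf n hx).trans (hk_iter k n hn hx)
      refine opNormW_bounds ?_ ⟨e0, e0_mem, e0_norm, ?_⟩
      · intro x hx hu
        rw [heq hx]
        calc ‖(hC ∘ fC^[k]) x‖ ≤ (k:ℝ) + 2 := hk_norm_bound _ hx hu
        _ ≤ (m : ℝ) * n + 2 := by nlinarith
      · rw [heq e0_mem]
        show 1 ≤ ‖hC (fC^[k] e0)‖
        rw [fk_e0, h_e0, e0_norm]
  have hterm_lb : ∀ n : ℕ+, 1 ≤ (opNormW (F^[(n:ℕ)]) W) ^ (((n:ℕ) : ℝ)⁻¹) := by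
    intro n
    have h := (key n n.one_le).1
    calc (1:ℝ) = 1 ^ (((n:ℕ) : ℝ)⁻¹) := (Real.one_rpow _).symm
    _ ≤ _ := Real.rpow_le_rpow (by norm_num) h (by positivity)
  have hbdd : BddBelow (Set.range fun n : ℕ+ => (opNormW (F^[(n:ℕ)]) W) ^ (((n:ℕ) : ℝ)⁻¹)) := by
    refine ⟨1, ?_⟩
    rintro y ⟨n, rfl⟩
    exact hterm_lb n
  apply le_antisymm
  · apply le_of_forall_pos_le_add
    intro ε hε
    have := (tendsto_bound m).eventually (eventually_lt_nhds (by linarith : (1:ℝ) < 1 + ε))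
    obtain ⟨n, hlt, hn⟩ := (this.and (eventually_ge_atTop 1)).exists
    have hterm : (opNormW (F^[n]) W) ^ ((n : ℝ)⁻¹) ≤ ((m : ℝ) * n + 2) ^ ((n : ℝ)⁻¹) :=
      Real.rpow_le_rpow (le_trans zero_le_one (key n hn).1) (key n hn).2 (by positivity)
    calc coneSpecRad F W ≤ (opNormW (F^[((⟨n, hn⟩ : ℕ+) : ℕ)]) W) ^ ((((⟨n, hn⟩ : ℕ+) : ℕ) : ℝ)⁻¹) :=
          ciInf_le hbdd _
    _ ≤ ((m : ℝ) * n + 2) ^ ((n : ℝ)⁻¹) := hterm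
    _ ≤ 1 + ε := le_of_lt hlt
  · exact le_ciInf hterm_lb


lemma fk_mem_famPow (k : ℕ) : fC^[k] ∈ famPow A k := by
  induction k with
  | zero => exact Set.mem_singleton _
  | succ k ih =>
    exact ⟨fC, Or.inl rfl, fC^[k], ih, by rw [Function.iterate_succ']⟩

lemma genTerm_eq_one (m : ℕ) : genTerm A W m = 1 := by
  have himg : (fun f => (coneSpecRad f W) ^ ((m : ℝ)⁻¹)) '' famPow A m = {1} := by
    apply Set.eq_singleton_iff_unique_mem.2
    constructor
    · exact ⟨fC^[m], fk_mem_famPow m, by simp [csr_eq_one (fk_mem_famPow m)]⟩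
    · rintro y ⟨F, hF, rfl⟩
      simp [csr_eq_one hF]
  rw [genTerm, himg, csSup_singleton]

lemma genRad_eq_one : genRad A W = 1 := by
  have : (fun m : ℕ+ => genTerm A W (m : ℕ)) = fun _ => (1:ℝ) :=
    funext fun m => genTerm_eq_one m
  rw [genRad, this]
  exact ciSup_const

lemma ones_mem : (fun _ => (1:ℝ)) ∈ W := fun i => zero_le_one

lemma fk_ones (k : ℕ) : fC^[k] (fun _ => (1:ℝ)) = ![(k:ℝ) + 1, 1] := by
  induction k with
  | zero =>
    apply ext2 <;> norm_num
  | succ k ih =>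
    rw [Function.iterate_succ_apply', ih]
    apply ext2
    · show (↑k + 1) + min ((k:ℝ) + 1) 1 = (↑(k+1) : ℝ) + 1
      rw [min_eq_right (by push_cast; linarith [Nat.cast_nonneg (α := ℝ) k])]
      push_cast; ring
    · rfl

lemma fk_ones_norm_lb (k : ℕ) : (k : ℝ) + 1 ≤ ‖fC^[k] (fun _ => (1:ℝ))‖ := by
  rw [fk_ones]
  calc (k:ℝ) + 1 = ‖(![(k:ℝ) + 1, 1] : Fin 2 → ℝ) 0‖ := by
        simp [abs_of_nonneg (by positivity : (0:ℝ) ≤ (k:ℝ) + 1)]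
  _ ≤ _ := norm_le_pi_norm _ 0

lemma ones_norm : ‖(fun _ => (1:ℝ) : Fin 2 → ℝ)‖ = 1 := by
  apply le_antisymm (norm_le_of_W ones_mem le_rfl le_rfl)
  have := norm_le_pi_norm (fun _ => (1:ℝ) : Fin 2 → ℝ) 0
  simpa using this

lemma irred : IrreducibleFam A := by
  rintro ⟨J, ⟨i, hi⟩, hJne, hinv⟩
  have hj : ∃ j, j ∉ J := by
    by_contra h
    push_neg at h
    exact hJne (Set.eq_univ_of_forall h)
  obtain ⟨j, hj⟩ := hj
  have hgmaps := hinv gC (Or.inr (Or.inl rfl))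
  have hhmaps := hinv hC (Or.inr (Or.inr rfl))
  have hij : i ≠ j := fun h => hj (h ▸ hi)
  fin_cases i <;> fin_cases j <;> (try exact hij rfl)
  · -- 0 ∈ J, 1 ∉ J : use e0 and gC
    have he0 : e0 ∈ stdFace J := by
      refine ⟨e0_mem, fun l hl => ?_⟩
      fin_cases l
      · exact absurd hi hl
      · rfl
    have := (hgmaps he0).2 1 hj
    norm_num [e0] at this
  · -- 1 ∈ J, 0 ∉ J : use e1 and hC
    have he1 : e1 ∈ stdFace J := by
      refine ⟨e1_mem, fun l hl => ?_⟩
      fin_cases l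
      · rfl
      · exact absurd hi hl
    have := (hhmaps he1).2 0 hj
    norm_num [e1] at this

end S11

theorem statement11 :
    IrreducibleFam ({fC, gC, hC} : Set ((Fin 2 → ℝ) → Fin 2 → ℝ)) ∧
    genRad ({fC, gC, hC} : Set ((Fin 2 → ℝ) → Fin 2 → ℝ)) (stdCone 2) = 1 ∧
    (∀ C : ℝ, ∃ k : ℕ, C < ‖fC^[k] (fun _ => 1)‖) ∧
    ¬ ∃ C : ℝ, ∀ m : ℕ, 0 < m →
        ∀ F ∈ famPow ({fC, gC, hC} : Set ((Fin 2 → ℝ) → Fin 2 → ℝ)) m,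
          ∀ x ∈ stdCone 2, ‖F x‖ ≤ C * ‖x‖ := by
  refine ⟨S11.irred, S11.genRad_eq_one, ?_, ?_⟩
  · intro C
    obtain ⟨k, hk⟩ := exists_nat_gt C
    exact ⟨k, lt_of_lt_of_le (by exact_mod_cast lt_of_lt_of_le hk (by linarith [le_refl (k:ℝ)] : (k:ℝ) ≤ k + 1)) (S11.fk_ones_norm_lb k)⟩
  · rintro ⟨C, hC⟩
    obtain ⟨k, hk⟩ := exists_nat_gt C
    have hmem := S11.fk_mem_famPow (k + 1)
    have hb := hC (k+1) (Nat.succ_pos k) _ hmem (fun _ => 1) S11.ones_mem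
    rw [S11.ones_norm, mul_one] at hb
    have := S11.fk_ones_norm_lb (k+1)
    push_cast at this
    linarith
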